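/- Suppose C : {0,1}^n → ({0,1}^ℓ)^m is a (1, c, ε)-quantum smooth code using b bits, let u = Σ_{i=0}^{b} binom(ℓ, i), assume 2^{b+1} ≤ cu, and let N be a positive integer with N ≥ cu/2^{b+1}. Then for every i ∈ [n] there exists a two-outcome POVM (E_i^0, E_i^1) on (ℂ^m ⊗ ℂ^{2^ℓ})^{⊗N} such that for every x ∈ {0,1}^n, ⟨U(x)^{⊗N}, E_i^{x_i} U(x)^{⊗N}⟩ ≥ 1/2 + ε/2. (That is, the N-fold tensor power of U(x) is a quantum random access code for x with recovery probability at least 1/2 + ε/2.) -/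

import Mathlib

open ComplexOrder Matrix

/-- A quantum decoding tuple `(j0, j1, S0, S1)`: the two query positions and the two
sets of answer bits used. -/
structure QTuple (m ℓ : ℕ) where
  j0 : Fin m
  j1 : Fin m
  S0 : Finset (Fin ℓ)
  S1 : Finset (Fin ℓ)
deriving DecidableEq

/-- Quantum decoding tuples form a finite type. -/
def QTuple.equivProd (m ℓ : ℕ) :
    (Fin m × Fin m × Finset (Fin ℓ) × Finset (Fin ℓ)) ≃ QTuple m ℓ where
  toFun p := ⟨p.1, p.2.1, p.2.2.1, p.2.2.2⟩
  invFun ω := ⟨ω.j0, ω.j1, ω.S0, ω.S1⟩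
  left_inv _ := rfl
  right_inv _ := rfl

instance (m ℓ : ℕ) : Fintype (QTuple m ℓ) :=
  Fintype.ofEquiv _ (QTuple.equivProd m ℓ)

/-- `χ T a = (-1)^{T · a}`, the sign given by the inner product mod 2 of the
characteristic vector of `T` with the bit string `a`. -/
noncomputable def chi {ℓ : ℕ} (T : Finset (Fin ℓ)) (a : Fin ℓ → Bool) : ℂ :=
  (-1) ^ (T.filter fun k => a k = true).card

/-- The state resulting from the quantum query
`Q = (1/√2)(|j0⟩ ⊗ 2^{-b/2} Σ_{T ⊆ S0} (-1)^{T·y_{j0}} |T⟩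
          + |j1⟩ ⊗ 2^{-b/2} Σ_{T ⊆ S1} (-1)^{T·y_{j1}} |T⟩)`
to the string `y : ({0,1}^ℓ)^m`, as a vector in `ℂ^m ⊗ ℂ^{2^ℓ}` (indexed by the
standard basis `Fin m × Finset (Fin ℓ)`). -/
noncomputable def Qvec {m ℓ : ℕ} (b : ℕ) (j0 j1 : Fin m) (S0 S1 : Finset (Fin ℓ))
    (y : Fin m → Fin ℓ → Bool) : Fin m × Finset (Fin ℓ) → ℂ :=
  fun p =>
    ((1 / (Real.sqrt 2 * Real.sqrt (2 ^ b)) : ℝ) : ℂ) *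
      ((if p.1 = j0 ∧ p.2 ⊆ S0 then chi p.2 (y j0) else 0) +
       (if p.1 = j1 ∧ p.2 ⊆ S1 then chi p.2 (y j1) else 0))

/-- `D` (a distribution over quantum decoding tuples) together with the POVMs `E`
witnesses that `C` is a `(1, c, ε)`-quantum smooth code using `b` bits at index `i`. -/
def IsQSCDecoder {n m ℓ : ℕ} (b : ℕ) (c ε : ℝ)
    (C : (Fin n → Bool) → Fin m → Fin ℓ → Bool) (i : Fin n)
    (D : QTuple m ℓ → ℝ)
    (E : QTuple m ℓ → Bool →
      Matrix (Fin m × Finset (Fin ℓ)) (Fin m × Finset (Fin ℓ)) ℂ) : Prop :=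
  (∀ ω, 0 ≤ D ω) ∧ (∑ ω, D ω = 1) ∧
  (∀ ω, D ω ≠ 0 → ω.j0 ≠ ω.j1 ∧ ω.S0.card = b ∧ ω.S1.card = b ∧
    (E ω false).PosSemidef ∧ (E ω true).PosSemidef ∧ E ω false + E ω true = 1) ∧
  (∀ x, 1 / 2 + ε ≤
    ∑ ω, D ω *
      (star (Qvec b ω.j0 ω.j1 ω.S0 ω.S1 (C x)) ⬝ᵥ
        (E ω (x i) *ᵥ Qvec b ω.j0 ω.j1 ω.S0 ω.S1 (C x))).re) ∧
  (∀ j : Fin m,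
    ∑ ω ∈ Finset.univ.filter
      (fun ω : QTuple m ℓ => ω.j0 = j ∨ ω.j1 = j), D ω ≤ c / m)

/-- `C : {0,1}^n → ({0,1}^ℓ)^m` is a `(1, c, ε)`-quantum smooth code using `b` bits. -/
def IsQSC (n m ℓ b : ℕ) (c ε : ℝ)
    (C : (Fin n → Bool) → Fin m → Fin ℓ → Bool) : Prop :=
  ∀ i : Fin n, ∃ (D : QTuple m ℓ → ℝ)
    (E : QTuple m ℓ → Bool →
      Matrix (Fin m × Finset (Fin ℓ)) (Fin m × Finset (Fin ℓ)) ℂ),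
    IsQSCDecoder b c ε C i D E

/-- The state `U(x) = (1/√m) Σ_j |j⟩ ⊗ (1/√u) Σ_{|T| ≤ b} (-1)^{T·C(x)_j} |T⟩`
in `ℂ^m ⊗ ℂ^{2^ℓ}`, where `u = Σ_{i=0}^{b} binom(ℓ, i)`. -/
noncomputable def Uvec (m ℓ b : ℕ) (y : Fin m → Fin ℓ → Bool) :
    Fin m × Finset (Fin ℓ) → ℂ :=
  fun p =>
    if p.2.card ≤ b then
      ((1 / (Real.sqrt m *
        Real.sqrt (∑ i ∈ Finset.range (b + 1), (ℓ.choose i : ℝ))) : ℝ) : ℂ) *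
        chi p.2 (y p.1)
    else 0

/-- The `N`-fold tensor power `U(x)^{⊗N}`, as a vector indexed by the standard basis
`Fin N → (Fin m × Finset (Fin ℓ))` of `(ℂ^m ⊗ ℂ^{2^ℓ})^{⊗N}`. -/
noncomputable def UvecN (m ℓ b N : ℕ) (y : Fin m → Fin ℓ → Bool) :
    (Fin N → Fin m × Finset (Fin ℓ)) → ℂ :=
  fun v => ∏ k, Uvec m ℓ b y (v k)


/-!
Write `α = ‖P_ω U(x)‖`, where `P_ω` projects onto the `2^{b+1}` basis vectors that support the
query state `Q_ω` of a decoding tuple `ω`; on that support `U(x)` is proportional to `Q_ω`, so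
`P_ω U(x) = α Q_ω` with `α² = 2^{b+1}/(mu)`. Compressing the decoder's POVMs by `P_ω` and weighting
them by `(m/c) D(ω)` gives operators `G₀, G₁` with `G₀ + G₁ = Σ_ω (m/c) D(ω) P_ω`, and smoothness
says exactly that `R = 1 - Σ_ω (m/c) D(ω) P_ω` is positive. On one copy of `U(x)` the
three-outcome POVM `(G₀, G₁, R)` gives the right bit with probability at least `β (1/2 + ε)` and
`R` with probability `1 - β`, where `β = 2^{b+1}/(cu) ≤ 1`. Applying it to the `N` copies in turn
and answering with the first outcome other than `R` (a fair coin if there is none) succeeds with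
probability at least `(1 - (1-β)^N)(1/2 + ε) + (1-β)^N/2`, and `(1-β)^N ≤ e^{-βN} ≤ 1/2`.
If `ε ≤ 0` the fair coin alone will do.
-/

namespace Matrix

variable {κ ι R 𝕜 : Type*} [Fintype κ]

def piKron [CommSemiring R] (A : κ → Matrix ι ι R) : Matrix (κ → ι) (κ → ι) R :=
  of fun v w => ∏ k, A k (v k) (w k)

@[simp]
lemma piKron_apply [CommSemiring R] (A : κ → Matrix ι ι R) (v w : κ → ι) :
    piKron A v w = ∏ k, A k (v k) (w k) := rfl

lemma piKron_mul [CommSemiring R] [Fintype ι] [DecidableEq κ] (A B : κ → Matrix ι ι R) :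
    piKron (fun k => A k * B k) = piKron A * piKron B := by
  ext v w
  simp only [piKron_apply, mul_apply, Finset.prod_univ_sum, Fintype.piFinset_univ,
    Finset.prod_mul_distrib]

lemma piKron_conjTranspose [CommSemiring R] [StarRing R] (A : κ → Matrix ι ι R) :
    piKron (fun k => (A k)ᴴ) = (piKron A)ᴴ := by
  ext v w
  simp only [piKron_apply, conjTranspose_apply, star_prod]

lemma piKron_one [CommSemiring R] [DecidableEq ι] :
    piKron (fun _ : κ => (1 : Matrix ι ι R)) = 1 := by
  ext v w
  by_cases h : v = w
  · subst h
    simp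
  · obtain ⟨k, hk⟩ := Function.ne_iff.mp h
    rw [piKron_apply, one_apply_ne h]
    exact Finset.prod_eq_zero (Finset.mem_univ k) (one_apply_ne hk)

lemma piKron_update_add [CommSemiring R] [DecidableEq κ] (A : κ → Matrix ι ι R) (k : κ)
    (X Y : Matrix ι ι R) :
    piKron (Function.update A k (X + Y))
      = piKron (Function.update A k X) + piKron (Function.update A k Y) := by
  ext v w
  have hrest (Z : Matrix ι ι R) :
      ∏ k' ∈ Finset.univ.erase k, Function.update A k Z k' (v k') (w k')
        = ∏ k' ∈ Finset.univ.erase k, A k' (v k') (w k') :=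
    Finset.prod_congr rfl fun k' hk' => by
      rw [Function.update_of_ne (Finset.ne_of_mem_erase hk')]
  simp only [piKron_apply, add_apply, ← Finset.mul_prod_erase _ _ (Finset.mem_univ k),
    Function.update_self, hrest, add_mul]

lemma piKron_mulVec_prod [CommSemiring R] [Fintype ι] [DecidableEq κ] (A : κ → Matrix ι ι R)
    (f : κ → ι → R) :
    piKron A *ᵥ (fun v => ∏ k, f k (v k)) = fun v => ∏ k, (A k *ᵥ f k) (v k) := by
  funext v
  simp only [mulVec, dotProduct, piKron_apply, ← Finset.prod_mul_distrib, Finset.prod_univ_sum,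
    Fintype.piFinset_univ]

lemma prod_dotProduct_prod [CommSemiring R] [Fintype ι] [DecidableEq κ] (f g : κ → ι → R) :
    (fun v : κ → ι => ∏ k, f k (v k)) ⬝ᵥ (fun v => ∏ k, g k (v k)) = ∏ k, f k ⬝ᵥ g k := by
  simp only [dotProduct, ← Finset.prod_mul_distrib, Finset.prod_univ_sum, Fintype.piFinset_univ]

lemma star_prod_dotProduct_piKron_mulVec_prod [CommSemiring R] [StarRing R] [Fintype ι]
    [DecidableEq κ] (A : κ → Matrix ι ι R) (f g : κ → ι → R) :
    star (fun v : κ → ι => ∏ k, f k (v k)) ⬝ᵥ (piKron A *ᵥ fun v => ∏ k, g k (v k))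
      = ∏ k, star (f k) ⬝ᵥ (A k *ᵥ g k) := by
  rw [piKron_mulVec_prod, ← prod_dotProduct_prod]
  congr 1
  funext v
  simp [star_prod]

lemma star_prod_dotProduct_prod_eq_one [CommSemiring R] [StarRing R] [Fintype ι] [DecidableEq ι]
    [DecidableEq κ] {v : ι → R} (hv : star v ⬝ᵥ v = 1) :
    star (fun w : κ → ι => ∏ k, v (w k)) ⬝ᵥ (fun w => ∏ k, v (w k)) = 1 := by
  simpa [piKron_one, hv] using
    star_prod_dotProduct_piKron_mulVec_prod (fun _ : κ => (1 : Matrix ι ι R)) (fun _ => v)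
      (fun _ => v)

open scoped MatrixOrder Matrix.Norms.L2Operator in
lemma PosSemidef.piKron [RCLike 𝕜] [Fintype ι] [DecidableEq ι] [DecidableEq κ]
    {A : κ → Matrix ι ι 𝕜} (hA : ∀ k, (A k).PosSemidef) : (piKron A).PosSemidef := by
  choose B hB using fun k => CStarAlgebra.nonneg_iff_eq_star_mul_self.mp (hA k).nonneg
  rw [show A = fun k => (B k)ᴴ * B k from funext hB, piKron_mul, piKron_conjTranspose]
  exact posSemidef_conjTranspose_mul_self _

end Matrix

lemma one_sub_pow_le_half {β : ℝ} {N : ℕ} (hβ1 : β ≤ 1) (hN : 1 ≤ β * N) :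
    (1 - β) ^ N ≤ 1 / 2 :=
  calc (1 - β) ^ N ≤ Real.exp (-β) ^ N :=
        pow_le_pow_left₀ (by linarith) (Real.one_sub_le_exp_neg β) N
    _ = Real.exp (-(β * N)) := by rw [← Real.exp_nat_mul]; ring_nf
    _ ≤ Real.exp (-1) := Real.exp_le_exp.mpr (by linarith)
    _ ≤ 1 / 2 := Real.exp_neg_one_lt_half.le

lemma half_add_half_le_geom_sum_mul_add {β ε g : ℝ} {N : ℕ} (hβ1 : β ≤ 1) (hN : 1 ≤ β * N)
    (hε : 0 ≤ ε) (hg : β * (1 / 2 + ε) ≤ g) :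
    1 / 2 + ε / 2 ≤ ∑ k ∈ Finset.range N, (1 - β) ^ k * g + 2⁻¹ * (1 - β) ^ N := by
  set S := ∑ k ∈ Finset.range N, (1 - β) ^ k
  have hS : 0 ≤ S := Finset.sum_nonneg fun k _ => pow_nonneg (by linarith) k
  have hSβ : S * β = 1 - (1 - β) ^ N := by simpa using geom_sum_mul_neg (1 - β) N
  have hρ := one_sub_pow_le_half hβ1 hN
  rw [← Finset.sum_mul]
  nlinarith [mul_le_mul_of_nonneg_left hg hS]

noncomputable section SequentialMeasurement

variable {ι 𝕜 : Type*} [DecidableEq ι] [RCLike 𝕜] {N : ℕ}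

def prefixKron (R X : Matrix ι ι 𝕜) (k : Fin N) : Matrix (Fin N → ι) (Fin N → ι) 𝕜 :=
  piKron (Function.update (fun k' => if k' < k then R else 1) k X)

def firstCopies (R : Matrix ι ι 𝕜) (j : ℕ) : Matrix (Fin N → ι) (Fin N → ι) 𝕜 :=
  piKron fun k' : Fin N => if (k' : ℕ) < j then R else 1

/-- Measure `(G false, G true, R)` on the copies one after the other and answer with the first
outcome other than `R`, or with a fair coin if every copy gives `R`. -/
def seqMeasurement (G : Bool → Matrix ι ι 𝕜) (R : Matrix ι ι 𝕜) (a : Bool) :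
    Matrix (Fin N → ι) (Fin N → ι) 𝕜 :=
  ∑ k, prefixKron R (G a) k + (2⁻¹ : ℝ) • piKron fun _ => R

lemma prefixKron_one (R : Matrix ι ι 𝕜) (k : Fin N) : prefixKron R 1 k = firstCopies R k := by
  unfold prefixKron firstCopies
  congr 1
  funext k'
  simp only [Function.update_apply, Fin.lt_def, Fin.ext_iff]
  split_ifs <;> first | rfl | omega

lemma prefixKron_self (R : Matrix ι ι 𝕜) (k : Fin N) :
    prefixKron R R k = firstCopies R (k + 1) := by
  unfold prefixKron firstCopies
  congr 1
  funext k'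
  simp only [Function.update_apply, Fin.lt_def, Fin.ext_iff]
  split_ifs <;> first | rfl | omega

lemma firstCopies_zero (R : Matrix ι ι 𝕜) : firstCopies (N := N) R 0 = 1 := by
  simp only [firstCopies, Nat.not_lt_zero, if_false, piKron_one]

lemma firstCopies_self (R : Matrix ι ι 𝕜) : firstCopies (N := N) R N = piKron fun _ => R := by
  simp only [firstCopies, Fin.is_lt, if_true]

lemma seqMeasurement_posSemidef [Fintype ι] {G : Bool → Matrix ι ι 𝕜} {R : Matrix ι ι 𝕜}
    (hG : ∀ a, (G a).PosSemidef) (hR : R.PosSemidef) (a : Bool) :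
    (seqMeasurement (N := N) G R a).PosSemidef := by
  refine .add (Finset.sum_induction _ _ (fun _ _ => .add) .zero fun k _ => ?_)
    ((PosSemidef.piKron fun _ => hR).smul (by norm_num))
  refine PosSemidef.piKron fun k' => ?_
  rcases eq_or_ne k' k with rfl | h
  · simpa using hG a
  · rw [Function.update_of_ne h]
    split_ifs
    exacts [hR, .one]

lemma seqMeasurement_false_add_true {G : Bool → Matrix ι ι 𝕜} {R : Matrix ι ι 𝕜}
    (h : G false + G true + R = 1) :
    seqMeasurement (N := N) G R false + seqMeasurement G R true = 1 := by
  have hstep (k : Fin N) : prefixKron R (G false) k + prefixKron R (G true) k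
      = firstCopies R k - firstCopies R (k + 1) := by
    rw [eq_sub_iff_add_eq, ← prefixKron_one, ← prefixKron_self, prefixKron, prefixKron,
      prefixKron, ← piKron_update_add, ← piKron_update_add, h]
    rfl
  have htelescope : ∑ k : Fin N, (firstCopies (N := N) R k - firstCopies R (k + 1))
      = 1 - piKron fun _ => R := by
    rw [Fin.sum_univ_eq_sum_range (fun j => firstCopies R j - firstCopies R (j + 1)),
      Finset.sum_range_sub', firstCopies_zero, firstCopies_self]
  calc seqMeasurement G R false + seqMeasurement G R true
      = ∑ k : Fin N, (prefixKron R (G false) k + prefixKron R (G true) k)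
        + ((2⁻¹ : ℝ) + 2⁻¹) • piKron fun _ => R := by
        rw [seqMeasurement, seqMeasurement, Finset.sum_add_distrib, add_smul]; abel
    _ = 1 := by
        simp only [hstep, htelescope]
        norm_num

lemma star_dotProduct_prefixKron_mulVec [Fintype ι] (R X : Matrix ι ι 𝕜) (k : Fin N)
    {v : ι → 𝕜} (hv : star v ⬝ᵥ v = 1) :
    star (fun w : Fin N → ι => ∏ k, v (w k)) ⬝ᵥ (prefixKron R X k *ᵥ fun w => ∏ k, v (w k))
      = (star v ⬝ᵥ (R *ᵥ v)) ^ (k : ℕ) * (star v ⬝ᵥ (X *ᵥ v)) := by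
  have hfactor (k' : Fin N) :
      star v ⬝ᵥ (Function.update (fun k' => if k' < k then R else 1) k X k' *ᵥ v)
        = Function.update (fun k' => if k' < k then star v ⬝ᵥ (R *ᵥ v) else 1) k
            (star v ⬝ᵥ (X *ᵥ v)) k' := by
    rcases eq_or_ne k' k with rfl | h
    · simp
    · simp only [Function.update_of_ne h]
      split_ifs
      exacts [rfl, by rw [one_mulVec, hv]]
  rw [prefixKron, star_prod_dotProduct_piKron_mulVec_prod _ (fun _ => v) (fun _ => v)]
  simp only [hfactor, Finset.prod_update_of_mem (Finset.mem_univ k), mul_comm _ (star v ⬝ᵥ _)]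
  rw [Finset.sdiff_singleton_eq_erase,
    Finset.prod_erase _ (f := fun k' => if k' < k then _ else 1) (if_neg (lt_irrefl k)),
    Finset.prod_ite, Finset.prod_const, Finset.prod_const_one, mul_one, Finset.filter_gt_eq_Iio,
    Fin.card_Iio]

lemma star_dotProduct_seqMeasurement_mulVec [Fintype ι] (G : Bool → Matrix ι ι 𝕜)
    (R : Matrix ι ι 𝕜) (a : Bool) {v : ι → 𝕜} (hv : star v ⬝ᵥ v = 1) :
    star (fun w : Fin N → ι => ∏ k, v (w k)) ⬝ᵥ (seqMeasurement G R a *ᵥ fun w => ∏ k, v (w k))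
      = ∑ k ∈ Finset.range N, (star v ⬝ᵥ (R *ᵥ v)) ^ k * (star v ⬝ᵥ (G a *ᵥ v))
        + (2⁻¹ : ℝ) • (star v ⬝ᵥ (R *ᵥ v)) ^ N := by
  rw [seqMeasurement, add_mulVec, dotProduct_add, sum_mulVec, dotProduct_sum, smul_mulVec,
    dotProduct_smul, star_prod_dotProduct_piKron_mulVec_prod _ (fun _ => v) (fun _ => v)]
  simp only [star_dotProduct_prefixKron_mulVec _ _ _ hv, Finset.prod_const, Finset.card_univ,
    Fintype.card_fin]
  rw [Fin.sum_univ_eq_sum_range (fun k => (star v ⬝ᵥ (R *ᵥ v)) ^ k * (star v ⬝ᵥ (G a *ᵥ v)))]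

lemma le_re_star_dotProduct_seqMeasurement_mulVec [Fintype ι] {G : Bool → Matrix ι ι 𝕜}
    {R : Matrix ι ι 𝕜} {a : Bool} {v : ι → 𝕜} {β ε : ℝ} (hv : star v ⬝ᵥ v = 1)
    (hR : star v ⬝ᵥ (R *ᵥ v) = ((1 - β : ℝ) : 𝕜))
    (hG : β * (1 / 2 + ε) ≤ RCLike.re (star v ⬝ᵥ (G a *ᵥ v)))
    (hβ1 : β ≤ 1) (hN : 1 ≤ β * N) (hε : 0 ≤ ε) :
    1 / 2 + ε / 2 ≤
      RCLike.re (star (fun w : Fin N → ι => ∏ k, v (w k)) ⬝ᵥ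
        (seqMeasurement G R a *ᵥ fun w => ∏ k, v (w k))) := by
  rw [star_dotProduct_seqMeasurement_mulVec G R a hv, hR]
  convert half_add_half_le_geom_sum_mul_add hβ1 hN hε hG using 1
  simp only [map_add, map_sum, RCLike.smul_re, ← RCLike.ofReal_pow, RCLike.re_ofReal_mul,
    RCLike.ofReal_re]

end SequentialMeasurement

section QuantumSmoothCode

open Finset

variable {m ℓ b : ℕ}

instance (ℓ : ℕ) : IsEmpty (QTuple 0 ℓ) := ⟨fun ω => ω.j0.elim0⟩

lemma star_chi_mul_chi (T : Finset (Fin ℓ)) (a : Fin ℓ → Bool) :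
    star (chi T a) * chi T a = 1 := by
  simp only [chi, star_pow, star_neg, star_one, ← mul_pow, neg_one_mul, neg_neg, one_pow]

lemma card_filter_card_le (ℓ b : ℕ) :
    #{T : Finset (Fin ℓ) | T.card ≤ b} = ∑ i ∈ range (b + 1), ℓ.choose i := by
  have hsplit : ({T : Finset (Fin ℓ) | T.card ≤ b} : Finset _)
      = (range (b + 1)).biUnion fun i => powersetCard i univ := by
    ext T
    simp
  rw [hsplit, card_biUnion fun i _ j _ hij => pairwise_disjoint_powersetCard univ hij]
  simp

noncomputable def signedIndicator (r : ℝ) (s : Finset (Fin m × Finset (Fin ℓ)))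
    (y : Fin m → Fin ℓ → Bool) : Fin m × Finset (Fin ℓ) → ℂ :=
  fun p => if p ∈ s then (r : ℂ) * chi p.2 (y p.1) else 0

lemma star_signedIndicator_dotProduct_self (r : ℝ) (s : Finset (Fin m × Finset (Fin ℓ)))
    (y : Fin m → Fin ℓ → Bool) :
    star (signedIndicator r s y) ⬝ᵥ signedIndicator r s y = ((r ^ 2 * #s : ℝ) : ℂ) := by
  have hterm (p : Fin m × Finset (Fin ℓ)) :
      star (signedIndicator r s y p) * signedIndicator r s y p
        = if p ∈ s then ((r ^ 2 : ℝ) : ℂ) else 0 := by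
    unfold signedIndicator
    split_ifs
    · rw [star_mul', mul_mul_mul_comm, star_chi_mul_chi, Complex.star_def, Complex.conj_ofReal]
      push_cast
      ring
    · simp
  simp only [dotProduct, Pi.star_apply, hterm, sum_ite_mem, univ_inter, sum_const, nsmul_eq_mul]
  push_cast
  ring

lemma signedIndicator_mul (a r : ℝ) (s : Finset (Fin m × Finset (Fin ℓ)))
    (y : Fin m → Fin ℓ → Bool) :
    signedIndicator (a * r) s y = (a : ℂ) • signedIndicator r s y := by
  funext p
  simp only [signedIndicator, Pi.smul_apply, smul_eq_mul, mul_ite, mul_zero, Complex.ofReal_mul,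
    mul_assoc]

lemma diagonal_mulVec_signedIndicator (r : ℝ) (s t : Finset (Fin m × Finset (Fin ℓ)))
    (y : Fin m → Fin ℓ → Bool) :
    diagonal (fun p => if p ∈ t then (1 : ℂ) else 0) *ᵥ signedIndicator r s y
      = signedIndicator r (s ∩ t) y := by
  funext p
  simp only [mulVec_diagonal, signedIndicator, mem_inter]
  split_ifs <;> simp_all

lemma one_le_sum_choose (ℓ b : ℕ) : 1 ≤ ∑ i ∈ range (b + 1), ℓ.choose i :=
  (Nat.choose_zero_right ℓ).symm.le.trans
    (single_le_sum (fun _ _ => Nat.zero_le _) (mem_range.mpr b.succ_pos))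

def lowWeight (m ℓ b : ℕ) : Finset (Fin m × Finset (Fin ℓ)) :=
  (univ : Finset (Fin m)) ×ˢ ({T : Finset (Fin ℓ) | T.card ≤ b} : Finset _)

noncomputable def Ucoef (m ℓ b : ℕ) : ℝ :=
  1 / (Real.sqrt m * Real.sqrt (∑ i ∈ range (b + 1), (ℓ.choose i : ℝ)))

lemma Uvec_eq_signedIndicator (y : Fin m → Fin ℓ → Bool) :
    Uvec m ℓ b y = signedIndicator (Ucoef m ℓ b) (lowWeight m ℓ b) y := by
  funext p
  simp [Uvec, signedIndicator, lowWeight, Ucoef]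

lemma Ucoef_sq (m ℓ b : ℕ) :
    Ucoef m ℓ b ^ 2 = 1 / (m * ∑ i ∈ range (b + 1), (ℓ.choose i : ℝ)) := by
  rw [Ucoef, div_pow, mul_pow, Real.sq_sqrt (Nat.cast_nonneg m),
    Real.sq_sqrt (sum_nonneg fun i _ => Nat.cast_nonneg _), one_pow]

lemma star_Uvec_dotProduct_self (hm : 0 < m) (y : Fin m → Fin ℓ → Bool) :
    star (Uvec m ℓ b y) ⬝ᵥ Uvec m ℓ b y = 1 := by
  have hu : (0 : ℝ) < ∑ i ∈ range (b + 1), (ℓ.choose i : ℝ) := by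
    exact_mod_cast one_le_sum_choose ℓ b
  rw [Uvec_eq_signedIndicator, star_signedIndicator_dotProduct_self, Ucoef_sq, lowWeight,
    card_product, card_univ, Fintype.card_fin, card_filter_card_le, Nat.cast_mul, Nat.cast_sum,
    one_div_mul_cancel (by positivity), Complex.ofReal_one]

def QTuple.IsValid (b : ℕ) (ω : QTuple m ℓ) : Prop :=
  ω.j0 ≠ ω.j1 ∧ ω.S0.card = b ∧ ω.S1.card = b

def querySupport (ω : QTuple m ℓ) : Finset (Fin m × Finset (Fin ℓ)) :=
  {ω.j0} ×ˢ ω.S0.powerset ∪ {ω.j1} ×ˢ ω.S1.powerset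

noncomputable def Qcoef (b : ℕ) : ℝ := 1 / (Real.sqrt 2 * Real.sqrt (2 ^ b))

lemma Qcoef_sq (b : ℕ) : Qcoef b ^ 2 = 1 / (2 * 2 ^ b) := by
  rw [Qcoef, div_pow, mul_pow, Real.sq_sqrt zero_le_two, Real.sq_sqrt (by positivity), one_pow]

lemma Qvec_eq_signedIndicator {ω : QTuple m ℓ} (hω : ω.j0 ≠ ω.j1) (y : Fin m → Fin ℓ → Bool) :
    Qvec b ω.j0 ω.j1 ω.S0 ω.S1 y = signedIndicator (Qcoef b) (querySupport ω) y := by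
  funext p
  obtain ⟨j, T⟩ := p
  simp only [Qvec, signedIndicator, querySupport, Qcoef, mem_union, mem_product, mem_singleton,
    mem_powerset]
  by_cases hA : j = ω.j0 ∧ T ⊆ ω.S0
  · obtain ⟨rfl, hT⟩ := hA
    simp [hT, hω]
  by_cases hB : j = ω.j1 ∧ T ⊆ ω.S1
  · obtain ⟨rfl, hT⟩ := hB
    simp [hT, Ne.symm hω]
  rw [if_neg hA, if_neg hB, if_neg (not_or.mpr ⟨hA, hB⟩), add_zero, mul_zero]

lemma eq_j0_or_eq_j1_of_mem_querySupport {ω : QTuple m ℓ} {p : Fin m × Finset (Fin ℓ)}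
    (hp : p ∈ querySupport ω) : ω.j0 = p.1 ∨ ω.j1 = p.1 := by
  simp only [querySupport, mem_union, mem_product, mem_singleton] at hp
  exact hp.imp (fun h => h.1.symm) (fun h => h.1.symm)

lemma card_querySupport {ω : QTuple m ℓ} (hω : ω.IsValid b) :
    #(querySupport ω) = 2 * 2 ^ b := by
  obtain ⟨hj, h0, h1⟩ := hω
  rw [querySupport, card_union_of_disjoint, card_product, card_product]
  · simp [h0, h1, two_mul]
  · simp [disjoint_left, hj.symm]

lemma querySupport_subset_lowWeight {ω : QTuple m ℓ} (hω : ω.IsValid b) :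
    querySupport ω ⊆ lowWeight m ℓ b := by
  obtain ⟨-, h0, h1⟩ := hω
  intro p hp
  simp only [querySupport, mem_union, mem_product, mem_singleton, mem_powerset] at hp
  simp only [lowWeight, mem_product, mem_univ, mem_filter, true_and]
  rcases hp with ⟨-, hp⟩ | ⟨-, hp⟩
  · exact h0 ▸ card_le_card hp
  · exact h1 ▸ card_le_card hp

noncomputable def supportProj (ω : QTuple m ℓ) :
    Matrix (Fin m × Finset (Fin ℓ)) (Fin m × Finset (Fin ℓ)) ℂ :=
  diagonal fun p => if p ∈ querySupport ω then 1 else 0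

lemma supportProj_conjTranspose (ω : QTuple m ℓ) : (supportProj ω)ᴴ = supportProj ω := by
  rw [supportProj, diagonal_conjTranspose]
  congr 1
  funext p
  split_ifs <;> simp [*]

lemma supportProj_mul_self (ω : QTuple m ℓ) :
    supportProj ω * supportProj ω = supportProj ω := by
  rw [supportProj, diagonal_mul_diagonal]
  congr 1
  funext p
  split_ifs <;> simp

lemma supportProj_mulVec_Uvec {ω : QTuple m ℓ} (hω : ω.IsValid b) (y : Fin m → Fin ℓ → Bool) :
    supportProj ω *ᵥ Uvec m ℓ b y
      = ((Ucoef m ℓ b / Qcoef b : ℝ) : ℂ) • Qvec b ω.j0 ω.j1 ω.S0 ω.S1 y := by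
  rw [Uvec_eq_signedIndicator, supportProj, diagonal_mulVec_signedIndicator,
    inter_eq_right.mpr (querySupport_subset_lowWeight hω), Qvec_eq_signedIndicator hω.1,
    ← signedIndicator_mul, div_mul_cancel₀ _ (by simp [Qcoef])]

lemma star_Qvec_dotProduct_self {ω : QTuple m ℓ} (hω : ω.IsValid b) (y : Fin m → Fin ℓ → Bool) :
    star (Qvec b ω.j0 ω.j1 ω.S0 ω.S1 y) ⬝ᵥ Qvec b ω.j0 ω.j1 ω.S0 ω.S1 y = 1 := by
  rw [Qvec_eq_signedIndicator hω.1, star_signedIndicator_dotProduct_self, card_querySupport hω,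
    Qcoef_sq]
  push_cast
  field_simp

lemma star_Uvec_dotProduct_supportProj_mul_mulVec {ω : QTuple m ℓ} (hω : ω.IsValid b)
    (y : Fin m → Fin ℓ → Bool) (M : Matrix (Fin m × Finset (Fin ℓ)) (Fin m × Finset (Fin ℓ)) ℂ) :
    star (Uvec m ℓ b y) ⬝ᵥ ((supportProj ω * M * supportProj ω) *ᵥ Uvec m ℓ b y)
      = (((Ucoef m ℓ b / Qcoef b) ^ 2 : ℝ) : ℂ) *
          (star (Qvec b ω.j0 ω.j1 ω.S0 ω.S1 y) ⬝ᵥ (M *ᵥ Qvec b ω.j0 ω.j1 ω.S0 ω.S1 y)) := by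
  have hcompress :
      star (Uvec m ℓ b y) ⬝ᵥ ((supportProj ω * M * supportProj ω) *ᵥ Uvec m ℓ b y)
        = star (supportProj ω *ᵥ Uvec m ℓ b y) ⬝ᵥ (M *ᵥ (supportProj ω *ᵥ Uvec m ℓ b y)) := by
    rw [star_mulVec, supportProj_conjTranspose, ← dotProduct_mulVec, mulVec_mulVec, mulVec_mulVec]
  rw [hcompress, supportProj_mulVec_Uvec hω, star_smul, mulVec_smul, smul_dotProduct,
    dotProduct_smul, smul_smul]
  simp [sq]

section Decoder

variable (D : QTuple m ℓ → ℝ)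
  (E : QTuple m ℓ → Bool → Matrix (Fin m × Finset (Fin ℓ)) (Fin m × Finset (Fin ℓ)) ℂ) (t : ℝ)

noncomputable def decodeOp (a : Bool) :
    Matrix (Fin m × Finset (Fin ℓ)) (Fin m × Finset (Fin ℓ)) ℂ :=
  ∑ ω, (t * D ω) • (supportProj ω * E ω a * supportProj ω)

noncomputable def abstainOp : Matrix (Fin m × Finset (Fin ℓ)) (Fin m × Finset (Fin ℓ)) ℂ :=
  1 - ∑ ω, (t * D ω) • supportProj ω

variable {D E t}

lemma decodeOp_posSemidef (ht : 0 ≤ t) (hD : ∀ ω, 0 ≤ D ω) {a : Bool}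
    (hE : ∀ ω, D ω ≠ 0 → (E ω a).PosSemidef) : (decodeOp D E t a).PosSemidef := by
  refine Finset.sum_induction _ _ (fun _ _ => .add) .zero fun ω _ => ?_
  rcases eq_or_ne (D ω) 0 with h | h
  · rw [h, mul_zero, zero_smul]
    exact .zero
  · simpa [supportProj_conjTranspose] using
      ((hE ω h).mul_mul_conjTranspose_same (supportProj ω)).smul (mul_nonneg ht (hD ω))

lemma decodeOp_false_add_true (hE : ∀ ω, D ω ≠ 0 → E ω false + E ω true = 1) :
    decodeOp D E t false + decodeOp D E t true = ∑ ω, (t * D ω) • supportProj ω := by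
  rw [decodeOp, decodeOp, ← sum_add_distrib]
  refine sum_congr rfl fun ω _ => ?_
  rcases eq_or_ne (D ω) 0 with h | h
  · simp [h]
  · rw [← smul_add, ← add_mul, ← mul_add, hE ω h, mul_one, supportProj_mul_self]

lemma abstainOp_eq_diagonal : abstainOp D t
    = diagonal fun p => ((1 - t * ∑ ω ∈ univ.filter (p ∈ querySupport ·), D ω : ℝ) : ℂ) := by
  ext p q
  simp only [abstainOp, supportProj, Matrix.sub_apply, Matrix.sum_apply, Matrix.smul_apply,
    diagonal_apply, one_apply]
  split_ifs with hpq
  · simp [sum_filter, mul_sum, apply_ite]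
  · simp

lemma abstainOp_posSemidef {c : ℝ} (hc : 0 ≤ c) (hD : ∀ ω, 0 ≤ D ω)
    (hsmooth : ∀ j : Fin m, ∑ ω ∈ univ.filter (fun ω : QTuple m ℓ => ω.j0 = j ∨ ω.j1 = j), D ω
      ≤ c / m) :
    (abstainOp D (m / c)).PosSemidef := by
  rw [abstainOp_eq_diagonal, posSemidef_diagonal_iff]
  intro p
  rw [Complex.zero_le_real, sub_nonneg]
  calc m / c * ∑ ω ∈ univ.filter (p ∈ querySupport ·), D ω
      ≤ m / c * (c / m) := by
        gcongr
        refine (sum_le_sum_of_subset_of_nonneg ?_ fun ω _ _ => hD ω).trans (hsmooth p.1)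
        exact monotone_filter_right _ fun ω _ => eq_j0_or_eq_j1_of_mem_querySupport
    _ ≤ 1 := by
        rw [div_mul_div_comm, mul_comm (m : ℝ)]
        exact div_self_le_one _

lemma re_star_Uvec_dotProduct_decodeOp_mulVec (hvalid : ∀ ω, D ω ≠ 0 → ω.IsValid b)
    (y : Fin m → Fin ℓ → Bool) (a : Bool) :
    (star (Uvec m ℓ b y) ⬝ᵥ (decodeOp D E t a *ᵥ Uvec m ℓ b y)).re
      = t * (Ucoef m ℓ b / Qcoef b) ^ 2 * ∑ ω, D ω *
          (star (Qvec b ω.j0 ω.j1 ω.S0 ω.S1 y) ⬝ᵥ (E ω a *ᵥ Qvec b ω.j0 ω.j1 ω.S0 ω.S1 y)).re := by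
  rw [decodeOp, sum_mulVec, dotProduct_sum, Complex.re_sum, mul_sum]
  refine sum_congr rfl fun ω _ => ?_
  rcases eq_or_ne (D ω) 0 with h | h
  · simp [h]
  · rw [smul_mulVec, dotProduct_smul, star_Uvec_dotProduct_supportProj_mul_mulVec (hvalid ω h),
      Complex.real_smul, ← mul_assoc, ← Complex.ofReal_mul, Complex.re_ofReal_mul]
    ring

lemma star_Uvec_dotProduct_abstainOp_mulVec (hm : 0 < m) (hD1 : ∑ ω, D ω = 1)
    (hvalid : ∀ ω, D ω ≠ 0 → ω.IsValid b) (y : Fin m → Fin ℓ → Bool) :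
    star (Uvec m ℓ b y) ⬝ᵥ (abstainOp D t *ᵥ Uvec m ℓ b y)
      = ((1 - t * (Ucoef m ℓ b / Qcoef b) ^ 2 : ℝ) : ℂ) := by
  have hterm (ω : QTuple m ℓ) :
      star (Uvec m ℓ b y) ⬝ᵥ (((t * D ω) • supportProj ω) *ᵥ Uvec m ℓ b y)
        = ((t * (Ucoef m ℓ b / Qcoef b) ^ 2 * D ω : ℝ) : ℂ) := by
    rcases eq_or_ne (D ω) 0 with h | h
    · simp [h]
    · have hP : supportProj ω = supportProj ω * 1 * supportProj ω := by
        rw [mul_one, supportProj_mul_self]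
      rw [smul_mulVec, dotProduct_smul, hP,
        star_Uvec_dotProduct_supportProj_mul_mulVec (hvalid ω h), one_mulVec,
        star_Qvec_dotProduct_self (hvalid ω h), Complex.real_smul]
      push_cast
      ring
  rw [abstainOp, sub_mulVec, dotProduct_sub, one_mulVec, star_Uvec_dotProduct_self hm,
    sum_mulVec, dotProduct_sum]
  simp only [hterm, ← Complex.ofReal_sum, ← mul_sum, hD1, mul_one]
  push_cast
  ring

end Decoder

section IsQSCDecoder

variable {n : ℕ} {c ε : ℝ} {C : (Fin n → Bool) → Fin m → Fin ℓ → Bool} {i : Fin n}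
  {D : QTuple m ℓ → ℝ}
  {E : QTuple m ℓ → Bool → Matrix (Fin m × Finset (Fin ℓ)) (Fin m × Finset (Fin ℓ)) ℂ}

lemma IsQSCDecoder.m_pos (hdec : IsQSCDecoder b c ε C i D E) : 0 < m := by
  have hD1 := hdec.2.1
  refine Nat.pos_of_ne_zero fun hm => ?_
  subst hm
  simp at hD1

lemma IsQSCDecoder.isValid (hdec : IsQSCDecoder b c ε C i D E) {ω : QTuple m ℓ} (hω : D ω ≠ 0) :
    ω.IsValid b :=
  ⟨(hdec.2.2.1 ω hω).1, (hdec.2.2.1 ω hω).2.1, (hdec.2.2.1 ω hω).2.2.1⟩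

lemma IsQSCDecoder.decodeOp_posSemidef (hdec : IsQSCDecoder b c ε C i D E) {t : ℝ} (ht : 0 ≤ t)
    (a : Bool) : (decodeOp D E t a).PosSemidef :=
  _root_.decodeOp_posSemidef ht hdec.1 fun ω hω => by
    cases a
    exacts [(hdec.2.2.1 ω hω).2.2.2.1, (hdec.2.2.1 ω hω).2.2.2.2.1]

lemma IsQSCDecoder.decodeOp_add_abstainOp (hdec : IsQSCDecoder b c ε C i D E) (t : ℝ) :
    decodeOp D E t false + decodeOp D E t true + abstainOp D t = 1 := by
  rw [decodeOp_false_add_true fun ω hω => (hdec.2.2.1 ω hω).2.2.2.2.2, abstainOp, add_sub_cancel]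

lemma IsQSCDecoder.le_re_star_Uvec_dotProduct_decodeOp_mulVec (hdec : IsQSCDecoder b c ε C i D E)
    {t : ℝ} (ht : 0 ≤ t) (x : Fin n → Bool) :
    t * (Ucoef m ℓ b / Qcoef b) ^ 2 * (1 / 2 + ε)
      ≤ (star (Uvec m ℓ b (C x)) ⬝ᵥ (decodeOp D E t (x i) *ᵥ Uvec m ℓ b (C x))).re := by
  rw [re_star_Uvec_dotProduct_decodeOp_mulVec fun ω => hdec.isValid]
  exact mul_le_mul_of_nonneg_left (hdec.2.2.2.1 x) (by positivity)

end IsQSCDecoder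

lemma natCast_div_mul_Ucoef_div_Qcoef_sq (hm : 0 < m) (ℓ b : ℕ) (c : ℝ) :
    m / c * (Ucoef m ℓ b / Qcoef b) ^ 2
      = 2 ^ (b + 1) / (c * ∑ i ∈ Finset.range (b + 1), (ℓ.choose i : ℝ)) := by
  have hu : (0 : ℝ) < ∑ i ∈ Finset.range (b + 1), (ℓ.choose i : ℝ) := by
    exact_mod_cast one_le_sum_choose ℓ b
  rw [div_pow, Ucoef_sq, Qcoef_sq]
  field_simp
  ring

lemma star_UvecN_dotProduct_self (hm : 0 < m) (N : ℕ) (y : Fin m → Fin ℓ → Bool) :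
    star (UvecN m ℓ b N y) ⬝ᵥ UvecN m ℓ b N y = 1 :=
  star_prod_dotProduct_prod_eq_one (star_Uvec_dotProduct_self hm y)

end QuantumSmoothCode

theorem stmt10_general (n m ℓ b : ℕ) (c ε : ℝ)
    (C : (Fin n → Bool) → Fin m → Fin ℓ → Bool)
    (h : IsQSC n m ℓ b c ε C)
    (u : ℕ) (hu : u = ∑ i ∈ Finset.range (b + 1), ℓ.choose i)
    (hcu : (2 ^ (b + 1) : ℝ) ≤ c * u)
    (N : ℕ) (hN : c * u / 2 ^ (b + 1) ≤ (N : ℝ)) :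
    ∀ i : Fin n,
      ∃ E : Bool → Matrix (Fin N → Fin m × Finset (Fin ℓ))
          (Fin N → Fin m × Finset (Fin ℓ)) ℂ,
        (E false).PosSemidef ∧ (E true).PosSemidef ∧ E false + E true = 1 ∧
        ∀ x : Fin n → Bool,
          1 / 2 + ε / 2 ≤
            (star (UvecN m ℓ b N (C x)) ⬝ᵥ
              (E (x i) *ᵥ UvecN m ℓ b N (C x))).re := by
  intro i
  obtain ⟨D, E, hdec⟩ := h i
  have hm := hdec.m_pos
  have hu0 : (0 : ℝ) < u := by rw [hu]; exact_mod_cast one_le_sum_choose ℓ b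
  have hc : 0 < c :=
    pos_of_mul_pos_left ((by positivity : (0 : ℝ) < 2 ^ (b + 1)).trans_le hcu) hu0.le
  rcases le_or_gt ε 0 with hε | hε
  · refine ⟨fun _ => (2⁻¹ : ℝ) • 1, .smul .one (by norm_num), .smul .one (by norm_num),
      by rw [← add_smul]; norm_num, fun x => ?_⟩
    rw [smul_mulVec, one_mulVec, dotProduct_smul, star_UvecN_dotProduct_self hm]
    simp
    linarith
  have hβ : m / c * (Ucoef m ℓ b / Qcoef b) ^ 2 = 2 ^ (b + 1) / (c * u) := by
    rw [natCast_div_mul_Ucoef_div_Qcoef_sq hm, hu]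
    push_cast
    rfl
  have hG := hdec.decodeOp_posSemidef (t := m / c) (by positivity)
  have hR := abstainOp_posSemidef hc.le hdec.1 hdec.2.2.2.2
  refine ⟨seqMeasurement (decodeOp D E (m / c)) (abstainOp D (m / c)),
    seqMeasurement_posSemidef hG hR _, seqMeasurement_posSemidef hG hR _,
    seqMeasurement_false_add_true (hdec.decodeOp_add_abstainOp _),
    fun x => le_re_star_dotProduct_seqMeasurement_mulVec (star_Uvec_dotProduct_self hm _)
      (star_Uvec_dotProduct_abstainOp_mulVec hm hdec.2.1 (fun ω => hdec.isValid) _)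
      (hdec.le_re_star_Uvec_dotProduct_decodeOp_mulVec (by positivity) x) ?_ ?_ hε.le⟩
  · rwa [hβ, div_le_one (by positivity)]
  · rwa [hβ, div_mul_eq_mul_div, one_le_div (by positivity), ← div_le_iff₀' (by positivity)]

/-- if `C` is a `(1, c, ε)`-quantum smooth code using `b` bits,
`u = Σ_{i=0}^{b} binom(ℓ,i)`, `2^{b+1} ≤ c·u`, and `N ≥ cu/2^{b+1}` is a positive
integer, then for every `i` there is a two-outcome POVM on `(ℂ^m ⊗ ℂ^{2^ℓ})^{⊗N}`
recovering `x_i` from `U(x)^{⊗N}` with probability at least `1/2 + ε/2`; i.e. the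
`N`-fold tensor power of `U(x)` is a quantum random access code for `x`. -/
theorem stmt10 (n m ℓ b : ℕ) (c ε : ℝ)
    (C : (Fin n → Bool) → Fin m → Fin ℓ → Bool)
    (h : IsQSC n m ℓ b c ε C)
    (u : ℕ) (hu : u = ∑ i ∈ Finset.range (b + 1), ℓ.choose i)
    (hcu : (2 ^ (b + 1) : ℝ) ≤ c * u)
    (N : ℕ) (hN1 : 0 < N) (hN : c * u / 2 ^ (b + 1) ≤ (N : ℝ)) :
    ∀ i : Fin n,
      ∃ E : Bool → Matrix (Fin N → Fin m × Finset (Fin ℓ))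
          (Fin N → Fin m × Finset (Fin ℓ)) ℂ,
        (E false).PosSemidef ∧ (E true).PosSemidef ∧ E false + E true = 1 ∧
        ∀ x : Fin n → Bool,
          1 / 2 + ε / 2 ≤
            (star (UvecN m ℓ b N (C x)) ⬝ᵥ
              (E (x i) *ᵥ UvecN m ℓ b N (C x))).re :=
  stmt10_general n m ℓ b c ε C h u hu hcu N hN
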